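/- arXiv:2308.05229 — 3 statements merged into one kernel-verified Lean document; each statement's English description precedes it below -/
import Mathlib

section
/- Suppose an additive quaternary [n,k,d]_4 code exists with n - d = s and d > 0. Applying the Griesmer bound to the concatenated binary linear [3n, 2k, 2d]_2 code yields 3s ≥ (n-s)(2^{2k-2}-1)/2^{2k-2}, and hence n/s ≤ 4 + 3/(4^{k-1}-1). -/
/-!
Write `Q = 2 ^ (K - 2)`, so that `2 ^ K = 4 Q`. Dropping the ceilings, the Griesmer sum for the
binary `[3n, K, 2d]` code is the geometric sum `2d (2 - 2 / 2 ^ K) = 4d - d / Q`, so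
`4d - d / Q ≤ 3n = 3d + 3s`, i.e. `d (Q - 1) / Q ≤ 3s`. Solving for `d` and adding `s` bounds
`n = d + s` by `s (4 + 3 / (Q - 1))`.
-/

open Finset

theorem sum_le_of_sum_ceil_le {α ι : Type*} [Ring α] [LinearOrder α] [IsStrictOrderedRing α]
    [FloorRing α] (t : Finset ι) (f : ι → α) {N : ℤ} (h : ∑ i ∈ t, ⌈f i⌉ ≤ N) :
    ∑ i ∈ t, f i ≤ N :=
  (sum_le_sum fun i _ => Int.le_ceil (f i)).trans (by exact_mod_cast h)

theorem sum_range_div_two_pow {α : Type*} [Field α] [CharZero α] (a : α) (K : ℕ) :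
    ∑ i ∈ range K, a / 2 ^ i = 2 * a - 2 * a / 2 ^ K := by
  simp_rw [div_eq_mul_inv, ← inv_pow]
  rw [← mul_sum, geom_sum_eq (by norm_num : (2 : α)⁻¹ ≠ 1)]
  field_simp
  ring

theorem add_div_le_of_mul_sub_one_div_le {α : Type*} [Field α] [LinearOrder α]
    [IsStrictOrderedRing α] {d s Q : α} (hQ : 1 < Q) (hs : 0 ≤ s)
    (h : d * (Q - 1) / Q ≤ 3 * s) : (d + s) / s ≤ 4 + 3 / (Q - 1) := by
  have hQ1 : 0 < Q - 1 := sub_pos.mpr hQ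
  have hd : d ≤ 3 * s + 3 * s / (Q - 1) := by
    rw [div_le_iff₀ (by linarith)] at h
    rw [show 3 * s + 3 * s / (Q - 1) = 3 * s * Q / (Q - 1) by field_simp; ring,
      le_div_iff₀ hQ1]
    exact h
  rcases hs.eq_or_lt with rfl | hs
  · simp only [div_zero]
    positivity
  · rw [div_le_iff₀ hs, add_mul, div_mul_eq_mul_div]
    linarith

/-- Griesmer bound consequence for additive quaternary codes: if an additive
`[n, k, d]₄` code exists with `d = n - s > 0` (here `K = 2k ≥ 3`, so `k ≥ 1.5`),
then the concatenated binary `[3n, 2k, 2d]₂` code satisfies the Griesmer bound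
`3n ≥ Σ_{i<2k} ⌈2d/2^i⌉`, which yields `3s ≥ (n-s)(2^(2k-2)-1)/2^(2k-2)`
and hence `n/s ≤ 4 + 3/(4^(k-1)-1) = 4 + 3/(2^(2k-2)-1)`. -/
theorem griesmer_asymptotic_upper_bound (n s d K : ℕ) (hK : 3 ≤ K)
    (hd : d = n - s) (hdpos : 0 < d)
    (hgriesmer : (∑ i ∈ Finset.range K, ⌈(2 * d : ℚ) / 2 ^ i⌉) ≤ (3 * n : ℤ)) :
    ((n : ℚ) - s) * ((2:ℚ) ^ (K - 2) - 1) / (2:ℚ) ^ (K - 2) ≤ (3 * s : ℚ) ∧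
      (n : ℚ) / s ≤ 4 + 3 / ((2:ℚ) ^ (K - 2) - 1) := by
  set Q : ℚ := 2 ^ (K - 2)
  have hQ : 1 < Q := one_lt_pow₀ one_lt_two (by omega)
  have hn : (n : ℚ) = d + s := by rw [hd, Nat.cast_sub (by omega)]; ring
  have hK4Q : (2 : ℚ) ^ K = 4 * Q := by
    rw [show (4 : ℚ) = 2 ^ 2 by norm_num, ← pow_add, Nat.add_sub_cancel' (by omega)]
  have hsum := sum_le_of_sum_ceil_le _ _ hgriesmer
  rw [sum_range_div_two_pow, hK4Q] at hsum
  have hmain : (d : ℚ) * (Q - 1) / Q ≤ 3 * s := by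
    have hQ0 : Q ≠ 0 := by positivity
    have hcancel : 2 * (2 * d : ℚ) / (4 * Q) = d / Q := by field_simp; ring
    rw [mul_sub_one, sub_div, mul_div_cancel_right₀ _ hQ0]
    push_cast at hsum
    linarith
  rw [hn, add_sub_cancel_right]
  exact ⟨hmain, add_div_le_of_mul_sub_one_div_le hQ (Nat.cast_nonneg s) hmain⟩
end

section
/- For every odd integer l ≥ 3, the projective space PG(l-1,2) admits a 3-cover by lines: a multiset of lines such that every point lies on exactly 3 lines of the multiset. -/
/-! A linear automorphism `T` of `F₂ⁿ` without nonzero fixed points gives a 3-cover: the lines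
`⟨x, T x⟩ = {0, x, T x, x + T x}` for `x ≠ 0`. A point `v` lies on `⟨x, T x⟩` exactly when `x` is
one of `v`, `T⁻¹ v`, `(1 + T)⁻¹ v`, and these are three distinct vectors; `1 + T` is invertible
because in characteristic 2 its kernel is the fixed space of `T`. Such a `T` exists once `n ≥ 2`:
identify `F₂ⁿ` with `F_{2ⁿ}` and multiply by an element outside `F₂`. -/

open Module

attribute [local instance] Classical.propDecidable

open Submodule

theorem ZMod.eq_zero_or_eq_one (a : ZMod 2) : a = 0 ∨ a = 1 := by decide +revert

section ThreeCover

variable {V : Type*} [AddCommGroup V] [Module (ZMod 2) V]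

def IsThreeCover (M : Multiset (Submodule (ZMod 2) V)) : Prop :=
  (∀ W ∈ M, finrank (ZMod 2) W = 2) ∧
    ∀ P : Submodule (ZMod 2) V, finrank (ZMod 2) P = 1 → (M.filter fun W => P ≤ W).card = 3

theorem ZModModule.finrank_span_pair {x y : V} (hx : x ≠ 0) (hy : y ≠ 0) (hxy : x ≠ y) :
    finrank (ZMod 2) (span (ZMod 2) {x, y}) = 2 := by
  have hli : LinearIndepOn (ZMod 2) id {x, y} := by
    refine (linearIndepOn_pair_iff id hxy hx).mpr fun c => ?_
    rcases c.eq_zero_or_eq_one with rfl | rfl <;> simp [hy.symm, hxy]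
  rw [finrank_span_set_eq_card hli]
  simp [hxy]

theorem ZModModule.mem_span_pair {x y v : V} :
    v ∈ span (ZMod 2) {x, y} ↔ v = 0 ∨ v = x ∨ v = y ∨ v = x + y := by
  rw [Submodule.mem_span_pair]
  constructor
  · rintro ⟨a, b, rfl⟩
    rcases a.eq_zero_or_eq_one with rfl | rfl <;> rcases b.eq_zero_or_eq_one with rfl | rfl <;> simp
  · rintro (rfl | rfl | rfl | rfl)
    exacts [⟨0, 0, by simp⟩, ⟨1, 0, by simp⟩, ⟨0, 1, by simp⟩, ⟨1, 1, by simp⟩]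

variable (T : V ≃ₗ[ZMod 2] V)

theorem injective_id_add_of_fixedPointFree (hT : ∀ x, T x = x → x = 0) :
    Function.Injective (LinearMap.id + T.toLinearMap : V →ₗ[ZMod 2] V) := by
  refine (injective_iff_map_eq_zero _).mpr fun x hx => hT x ?_
  rw [LinearMap.add_apply, LinearMap.id_apply, LinearEquiv.coe_coe] at hx
  rw [eq_neg_of_add_eq_zero_right hx, ZModModule.neg_eq_self]

noncomputable def addApplyEquiv [Finite V] (hT : ∀ x, T x = x → x = 0) : V ≃ₗ[ZMod 2] V :=
  LinearEquiv.ofBijective (LinearMap.id + T.toLinearMap)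
    (Finite.injective_iff_bijective.mp (injective_id_add_of_fixedPointFree T hT))

theorem addApplyEquiv_apply [Finite V] (hT : ∀ x, T x = x → x = 0) (x : V) :
    addApplyEquiv T hT x = x + T x := rfl

theorem mem_span_pair_apply_iff [Finite V] (hT : ∀ x, T x = x → x = 0) {v : V}
    (hv : v ≠ 0) (x : V) :
    v ∈ span (ZMod 2) {x, T x} ↔ x = v ∨ x = T.symm v ∨ x = (addApplyEquiv T hT).symm v := by
  rw [ZModModule.mem_span_pair, LinearEquiv.eq_symm_apply, LinearEquiv.eq_symm_apply,
    addApplyEquiv_apply]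
  simp only [hv, false_or, eq_comm]

theorem card_filter_mem_span_pair_apply [Fintype V] (hT : ∀ x, T x = x → x = 0) {v : V}
    (hv : v ≠ 0) : {x ∈ Finset.univ.erase (0 : V) | v ∈ span (ZMod 2) {x, T x}}.card = 3 := by
  set E := addApplyEquiv T hT
  have hfilter :
      {x ∈ Finset.univ.erase (0 : V) | v ∈ span (ZMod 2) {x, T x}} = {v, T.symm v, E.symm v} := by
    ext x
    simp only [Finset.mem_filter, Finset.mem_erase, Finset.mem_univ, and_true, Finset.mem_insert,
      Finset.mem_singleton, mem_span_pair_apply_iff T hT hv]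
    refine and_iff_right_of_imp ?_
    rintro (rfl | rfl | rfl) <;> simpa using hv
  rw [hfilter, Finset.card_eq_three]
  refine ⟨_, _, _, ?_, ?_, ?_, rfl⟩
  · exact fun h => hv (hT v ((LinearEquiv.eq_symm_apply T).mp h))
  · intro h
    have : v + T v = v := (LinearEquiv.eq_symm_apply E).mp h
    exact hv (T.map_eq_zero_iff.mp (add_eq_left.mp this))
  · intro h
    have : T.symm v + T (T.symm v) = v := (LinearEquiv.eq_symm_apply E).mp h
    rw [T.apply_symm_apply, add_eq_right, T.symm.map_eq_zero_iff] at this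
    exact hv this

noncomputable def spanApplyLines [Fintype V] : Multiset (Submodule (ZMod 2) V) :=
  (Finset.univ.erase 0).val.map fun x => span (ZMod 2) {x, T x}

theorem isThreeCover_spanApplyLines [Fintype V] (hT : ∀ x, T x = x → x = 0) :
    IsThreeCover (spanApplyLines T) := by
  constructor
  · simp only [spanApplyLines, Multiset.mem_map, Finset.mem_val, Finset.mem_erase,
      Finset.mem_univ, and_true]
    rintro _ ⟨x, hx, rfl⟩
    exact ZModModule.finrank_span_pair hx (T.map_ne_zero_iff.mpr hx) fun h => hx (hT x h.symm)
  · intro P hP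
    obtain ⟨v, hvP, hv⟩ := P.ne_bot_iff.mp (by rintro rfl; simp at hP)
    rw [eq_span_singleton_of_mem_of_finrank_eq_one hP hvP hv]
    simp only [span_singleton_le_iff_mem, spanApplyLines, Multiset.filter_map, Multiset.card_map]
    exact card_filter_mem_span_pair_apply T hT hv

theorem exists_fixedPointFree_linearEquiv [Module.Finite (ZMod 2) V]
    (hV : 2 ≤ finrank (ZMod 2) V) : ∃ T : V ≃ₗ[ZMod 2] V, ∀ x, T x = x → x = 0 := by
  set n := finrank (ZMod 2) V
  have hn : n ≠ 0 := by omega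
  let K := GaloisField 2 n
  let _ : Fintype K := Fintype.ofFinite K
  obtain ⟨α, -, hα⟩ : ∃ α ∈ Finset.univ, α ∉ ({0, 1} : Finset K) := by
    refine Finset.exists_mem_notMem_of_card_lt_card (Finset.card_le_two.trans_lt ?_)
    rw [Finset.card_univ, ← Nat.card_eq_fintype_card, GaloisField.card 2 n hn]
    calc 2 = 2 ^ 1 := rfl
      _ < 2 ^ n := Nat.pow_lt_pow_right (by norm_num) (by omega)
  simp only [Finset.mem_insert, Finset.mem_singleton, not_or] at hα
  let e : V ≃ₗ[ZMod 2] K := LinearEquiv.ofFinrankEq _ _ (GaloisField.finrank 2 hn).symm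
  let μ : K ≃ₗ[ZMod 2] K := (LinearEquiv.smulOfNeZero K K α hα.1).restrictScalars (ZMod 2)
  refine ⟨e.trans (μ.trans e.symm), fun x hx => ?_⟩
  have : (α - 1) * e x = 0 := by
    rw [LinearEquiv.trans_apply, LinearEquiv.trans_apply, LinearEquiv.symm_apply_eq] at hx
    simp only [μ, LinearEquiv.restrictScalars_apply, LinearEquiv.smulOfNeZero_apply,
      smul_eq_mul] at hx
    linear_combination hx
  simpa [sub_ne_zero.mpr hα.2] using this

end ThreeCover

theorem exists_three_cover_general (l : ℕ) (hl : 3 ≤ l) :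
    ∃ M : Multiset (Submodule (ZMod 2) (Fin l → ZMod 2)),
      (∀ W ∈ M, finrank (ZMod 2) W = 2) ∧
      ∀ P : Submodule (ZMod 2) (Fin l → ZMod 2),
        finrank (ZMod 2) P = 1 → (M.filter fun W => P ≤ W).card = 3 := by
  obtain ⟨T, hT⟩ := exists_fixedPointFree_linearEquiv (V := Fin l → ZMod 2)
    (by rw [finrank_fin_fun]; omega)
  exact ⟨spanApplyLines T, isThreeCover_spanApplyLines T hT⟩

/-- For every odd `l ≥ 3`, the projective space `PG(l-1,2)` admits a 3-cover by
lines: a multiset of lines (2-dimensional subspaces of `F₂^l`) such that every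
point (1-dimensional subspace) lies on exactly 3 lines of the multiset, counted
with multiplicity. -/
theorem exists_three_cover (l : ℕ) (hl : 3 ≤ l) (hodd : Odd l) :
    ∃ M : Multiset (Submodule (ZMod 2) (Fin l → ZMod 2)),
      (∀ W ∈ M, finrank (ZMod 2) W = 2) ∧
      ∀ P : Submodule (ZMod 2) (Fin l → ZMod 2),
        finrank (ZMod 2) P = 1 → (M.filter fun W => P ≤ W).card = 3 :=
  exists_three_cover_general l hl
end

section
/- For odd l ≥ 3, there exists a partial spread of PG(l-1,2) whose lines partition the set of points outside a fixed Fano subplane E; the number of lines in this partial spread is (2^l - 8)/3. -/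
open Module

attribute [local instance] Classical.propDecidable

/-!
Enlarge `E` two dimensions at a time. If `U ⊇ E` has dimension `m ≥ 2` and `D` is a plane with
`U ∩ D = 0`, identify `U` with the field `K = 𝔽_{p^m}` and `D` with a 2-dimensional
`𝔽_p`-subspace `M ⊆ K`. In `K × M` the `p^m` planes `{(x t, t) : t ∈ M}`, `x ∈ K`, meet `K × 0`
trivially, and a vector `(y, t)` with `t ≠ 0` lies on exactly one of them, the one with
`x = y / t`. Adding these lines to a partition of the points of `U` outside `E` gives one of
`U ⊕ D`, so starting from the empty partition of `E` we reach the whole space when its dimension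
`l` has the parity of `dim E`. Each line has `p² - 1` nonzero vectors, whence
`(p² - 1) |S| + p ^ dim E = p ^ l`, i.e. `|S| = (2^l - 8) / 3` for `p = 2`, `dim E = 3`.
-/

open Finset Submodule

section LinePartition

variable {F V V' : Type*} [Field F] [AddCommGroup V] [Module F V] [AddCommGroup V'] [Module F V']

/-- A vector outside `E` is nonzero, so `existsUnique` says that every point of `PG(U)` outside
`PG(E)` lies on exactly one line of `S`. -/
structure IsLinePartition (U E : Submodule F V) (S : Finset (Submodule F V)) : Prop where
  finrank_eq_two : ∀ W ∈ S, finrank F W = 2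
  le : ∀ W ∈ S, W ≤ U
  disjoint : ∀ W ∈ S, Disjoint W E
  existsUnique : ∀ v ∈ U, v ∉ E → ∃! W, W ∈ S ∧ v ∈ W

namespace IsLinePartition

variable {U U₂ E : Submodule F V} {S T : Finset (Submodule F V)}

lemma empty (E : Submodule F V) : IsLinePartition E E ∅ where
  finrank_eq_two := by simp
  le := by simp
  disjoint := by simp
  existsUnique v hv hvE := absurd hv hvE

lemma disjoint_finset (hS : IsLinePartition U E S) (hT : IsLinePartition U₂ U T) :
    Disjoint S T := by
  refine Finset.disjoint_left.mpr fun W hWS hWT => ?_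
  have hW : W = ⊥ := (hT.disjoint W hWT).eq_bot_of_le (hS.le W hWS)
  have := hS.finrank_eq_two W hWS
  rw [hW, finrank_bot] at this
  omega

lemma union (hS : IsLinePartition U E S) (hT : IsLinePartition U₂ U T) (hEU : E ≤ U)
    (hUU₂ : U ≤ U₂) : IsLinePartition U₂ E (S ∪ T) where
  finrank_eq_two W hW := (mem_union.mp hW).elim (hS.finrank_eq_two W) (hT.finrank_eq_two W)
  le W hW := (mem_union.mp hW).elim (fun h => (hS.le W h).trans hUU₂) (hT.le W)
  disjoint W hW :=
    (mem_union.mp hW).elim (hS.disjoint W) fun h => (hT.disjoint W h).mono_right hEU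
  existsUnique v hv hvE := by
    by_cases hvU : v ∈ U
    · obtain ⟨W, ⟨hWS, hvW⟩, huniq⟩ := hS.existsUnique v hvU hvE
      refine ⟨W, ⟨mem_union_left T hWS, hvW⟩, fun W' ⟨hW', hvW'⟩ => ?_⟩
      rcases mem_union.mp hW' with hW' | hW'
      · exact huniq W' ⟨hW', hvW'⟩
      · have hv0 : v = 0 := (Submodule.disjoint_def.mp (hT.disjoint W' hW')) v hvW' hvU
        exact absurd (hv0 ▸ E.zero_mem) hvE
    · obtain ⟨W, ⟨hWT, hvW⟩, huniq⟩ := hT.existsUnique v hv hvU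
      refine ⟨W, ⟨mem_union_right S hWT, hvW⟩, fun W' ⟨hW', hvW'⟩ => ?_⟩
      rcases mem_union.mp hW' with hW' | hW'
      · exact absurd (hS.le W' hW' hvW') hvU
      · exact huniq W' ⟨hW', hvW'⟩

lemma map (hS : IsLinePartition U E S) {f : V →ₗ[F] V'} (hf : Function.Injective f) :
    IsLinePartition (U.map f) (E.map f) (S.image (Submodule.map f)) where
  finrank_eq_two W' hW' := by
    obtain ⟨W, hW, rfl⟩ := mem_image.mp hW'
    rw [← (equivMapOfInjective f hf W).finrank_eq]
    exact hS.finrank_eq_two W hW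
  le W' hW' := by
    obtain ⟨W, hW, rfl⟩ := mem_image.mp hW'
    exact map_mono (hS.le W hW)
  disjoint W' hW' := by
    obtain ⟨W, hW, rfl⟩ := mem_image.mp hW'
    exact disjoint_map hf (hS.disjoint W hW)
  existsUnique v' hv' hv'E := by
    have mem_map_iff (v : V) (W : Submodule F V) : f v ∈ W.map f ↔ v ∈ W := by
      rw [← mem_comap, comap_map_eq_of_injective hf]
    obtain ⟨v, hv, rfl⟩ := mem_map.mp hv'
    obtain ⟨W, ⟨hWS, hvW⟩, huniq⟩ :=
      hS.existsUnique v hv fun hvE => hv'E ((mem_map_iff v E).mpr hvE)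
    refine ⟨W.map f, ⟨mem_image_of_mem _ hWS, (mem_map_iff v W).mpr hvW⟩, ?_⟩
    rintro _ ⟨hW', hvW'⟩
    obtain ⟨W₁, hW₁, rfl⟩ := mem_image.mp hW'
    rw [huniq W₁ ⟨hW₁, (mem_map_iff v W₁).mp hvW'⟩]

lemma not_le_of_le (hS : IsLinePartition U E S) {P : Submodule F V} (hP : finrank F P = 1)
    (hPE : P ≤ E) {W : Submodule F V} (hW : W ∈ S) : ¬ P ≤ W := by
  intro hPW
  have : P = ⊥ := ((hS.disjoint W hW).mono_left hPW).eq_bot_of_le hPE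
  rw [this, finrank_bot] at hP
  omega

lemma card_filter_le_eq_one (hS : IsLinePartition U E S) {P : Submodule F V}
    (hP : finrank F P = 1) (hPU : P ≤ U) (hPE : ¬ P ≤ E) :
    (S.filter fun W => P ≤ W).card = 1 := by
  obtain ⟨v, hvP, hvE⟩ := SetLike.not_le_iff_exists.mp hPE
  have hv0 : v ≠ 0 := fun h => hvE (h ▸ E.zero_mem)
  rw [eq_span_singleton_of_mem_of_finrank_eq_one hP hvP hv0, card_eq_one_iff_existsUnique]
  simpa only [mem_filter, span_singleton_le_iff_mem] using hS.existsUnique v (hPU hvP) hvE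

end IsLinePartition

end LinePartition

section GraphLine

variable {F K : Type*} [Field F] [Field K] [Algebra F K] (M : Submodule F K)

def graphLine (x : K) : Submodule F (K × M) :=
  LinearMap.range ((LinearMap.mulLeft F x ∘ₗ M.subtype).prod LinearMap.id)

variable {M}

lemma mem_graphLine {x : K} {v : K × M} : v ∈ graphLine M x ↔ v.1 = x * v.2 := by
  constructor
  · rintro ⟨t, rfl⟩
    rfl
  · intro h
    exact ⟨v.2, Prod.ext h.symm rfl⟩

lemma finrank_graphLine (x : K) : finrank F (graphLine M x) = finrank F M :=
  LinearMap.finrank_range_of_inj fun _ _ h => congrArg Prod.snd h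

lemma graphLine_injective (hM : M ≠ ⊥) : Function.Injective (graphLine M) := by
  intro x x' h
  obtain ⟨t, htM, ht0⟩ := M.exists_mem_ne_zero_of_ne_bot hM
  have hmem : ((x * t, ⟨t, htM⟩) : K × M) ∈ graphLine M x' := h ▸ mem_graphLine.mpr rfl
  exact mul_right_cancel₀ ht0 (mem_graphLine.mp hmem)

lemma isLinePartition_graphLine [Fintype K] (hM : finrank F M = 2) :
    IsLinePartition ⊤ (LinearMap.ker (LinearMap.snd F K M)) (univ.image (graphLine M)) where
  finrank_eq_two W hW := by
    obtain ⟨x, -, rfl⟩ := mem_image.mp hW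
    rw [finrank_graphLine, hM]
  le _ _ := le_top
  disjoint W hW := by
    obtain ⟨x, -, rfl⟩ := mem_image.mp hW
    refine Submodule.disjoint_def.mpr fun v hvL hv0 => ?_
    have ht : v.2 = 0 := hv0
    exact Prod.ext (by simp [mem_graphLine.mp hvL, ht]) ht
  existsUnique v _ hv0 := by
    have ht : (v.2 : K) ≠ 0 := by simpa using hv0
    refine ⟨graphLine M (v.1 / v.2), ⟨mem_image_of_mem _ (mem_univ _), ?_⟩, ?_⟩
    · rw [mem_graphLine, div_mul_cancel₀ _ ht]
    · rintro _ ⟨hW, hvW⟩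
      obtain ⟨x, -, rfl⟩ := mem_image.mp hW
      rw [mem_graphLine.mp hvW, mul_div_cancel_right₀ _ ht]

end GraphLine

section Subspaces

variable {F V : Type*} [Field F] [AddCommGroup V] [Module F V]

lemma Submodule.exists_le_finrank_eq (C : Submodule F V) {n : ℕ} (hn : n ≤ finrank F C) :
    ∃ D ≤ C, finrank F D = n := by
  obtain ⟨b, hb⟩ := exists_linearIndependent_of_le_finrank hn
  refine ⟨span F (Set.range (C.subtype ∘ b)), span_le.mpr ?_, ?_⟩
  · rintro _ ⟨i, rfl⟩
    exact (b i).2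
  · rw [finrank_span_eq_card (hb.map' C.subtype C.ker_subtype), Fintype.card_fin]

lemma Submodule.exists_disjoint_finrank_eq [FiniteDimensional F V] (U : Submodule F V) {n : ℕ}
    (hn : finrank F U + n ≤ finrank F V) : ∃ D, Disjoint U D ∧ finrank F D = n := by
  obtain ⟨C, hC⟩ := U.exists_isCompl
  have hCdim := finrank_add_eq_of_isCompl hC
  obtain ⟨D, hDC, hD⟩ := C.exists_le_finrank_eq (n := n) (by omega)
  exact ⟨D, hC.disjoint.mono_right hDC, hD⟩

end Subspaces

section PrimeField

variable {p : ℕ} [Fact p.Prime] {V : Type*} [AddCommGroup V] [Module (ZMod p) V]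
  [FiniteDimensional (ZMod p) V]

lemma exists_isLinePartition_sup {U D : Submodule (ZMod p) V} (hUD : Disjoint U D)
    (hD : finrank (ZMod p) D = 2) (hU : 2 ≤ finrank (ZMod p) U) :
    ∃ T, IsLinePartition (U ⊔ D) U T ∧ T.card = p ^ finrank (ZMod p) U := by
  set m := finrank (ZMod p) U
  let K := GaloisField p m
  have hK : finrank (ZMod p) K = m := GaloisField.finrank p (by omega)
  let _ := Fintype.ofFinite K
  obtain ⟨M, -, hM⟩ :=
    (⊤ : Submodule (ZMod p) K).exists_le_finrank_eq (n := 2) (by rwa [finrank_top, hK])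
  let e₁ : K ≃ₗ[ZMod p] U := LinearEquiv.ofFinrankEq _ _ hK
  let e₂ : M ≃ₗ[ZMod p] D := LinearEquiv.ofFinrankEq _ _ (hM.trans hD.symm)
  let f := (U.subtype ∘ₗ e₁.toLinearMap).coprod (D.subtype ∘ₗ e₂.toLinearMap)
  have hrange₁ : LinearMap.range (U.subtype ∘ₗ e₁.toLinearMap) = U := by
    rw [LinearMap.range_comp_of_range_eq_top _ (LinearEquiv.range _), range_subtype]
  have hrange₂ : LinearMap.range (D.subtype ∘ₗ e₂.toLinearMap) = D := by
    rw [LinearMap.range_comp_of_range_eq_top _ (LinearEquiv.range _), range_subtype]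
  have hf : Function.Injective f := by
    have hdisj : Disjoint (LinearMap.range (U.subtype ∘ₗ e₁.toLinearMap))
        (LinearMap.range (D.subtype ∘ₗ e₂.toLinearMap)) := by
      rwa [hrange₁, hrange₂]
    rw [← LinearMap.ker_eq_bot, LinearMap.ker_coprod_of_disjoint_range _ _ hdisj,
      LinearMap.ker_comp, LinearMap.ker_comp, ker_subtype, ker_subtype, comap_bot, comap_bot,
      LinearEquiv.ker, LinearEquiv.ker, prod_bot]
  have hfU : (LinearMap.ker (LinearMap.snd _ K M)).map f = U := by
    rw [← LinearMap.range_inl, ← LinearMap.range_comp, LinearMap.coprod_inl, hrange₁]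
  have hfUD : (⊤ : Submodule _ (K × M)).map f = U ⊔ D := by
    rw [Submodule.map_top, LinearMap.range_coprod, hrange₁, hrange₂]
  refine ⟨(univ.image (graphLine M)).image (map f),
    hfUD ▸ hfU ▸ (isLinePartition_graphLine hM).map hf, ?_⟩
  have hM0 : M ≠ ⊥ := by
    rintro rfl
    simp at hM
  rw [card_image_of_injective _ (map_injective_of_injective hf),
    card_image_of_injective _ (graphLine_injective hM0), card_univ, Fintype.card_eq_nat_card,
    GaloisField.card p m (by omega)]

lemma exists_isLinePartition_finrank_add {E : Submodule (ZMod p) V}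
    (hE : 2 ≤ finrank (ZMod p) E) (j : ℕ)
    (hj : finrank (ZMod p) E + 2 * j ≤ finrank (ZMod p) V) :
    ∃ U S, E ≤ U ∧ finrank (ZMod p) U = finrank (ZMod p) E + 2 * j ∧ IsLinePartition U E S ∧
      (p ^ 2 - 1) * S.card + p ^ finrank (ZMod p) E = p ^ finrank (ZMod p) U := by
  induction j with
  | zero => exact ⟨E, ∅, le_rfl, rfl, IsLinePartition.empty E, by simp⟩
  | succ j ih =>
    obtain ⟨U, S, hEU, hU, hS, hcard⟩ := ih (by omega)
    obtain ⟨D, hUD, hD⟩ := U.exists_disjoint_finrank_eq (n := 2) (by omega)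
    obtain ⟨T, hT, hTcard⟩ := exists_isLinePartition_sup hUD hD (by omega)
    have hUD_dim : finrank (ZMod p) ↥(U ⊔ D) = finrank (ZMod p) U + 2 := by
      have := finrank_sup_add_finrank_inf_eq U D
      rwa [hUD.eq_bot, finrank_bot, add_zero, hD] at this
    refine ⟨U ⊔ D, S ∪ T, hEU.trans le_sup_left, by omega, hS.union hT hEU le_sup_left, ?_⟩
    rw [card_union_of_disjoint (hS.disjoint_finset hT), hTcard, hUD_dim, pow_add, ← hcard]
    have : 1 ≤ p ^ 2 := Nat.one_le_pow _ _ (Nat.Prime.pos Fact.out)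
    zify [this]
    ring

end PrimeField

/-- Blokhuis–Brouwer: for odd `l ≥ 3` and any Fano subplane `E` (a 3-dimensional
subspace of `F₂^l` viewed projectively) there is a partial spread of lines
partitioning the points of `PG(l-1,2)` outside `E`: every point not in `E` lies
on exactly one line of the partial spread, no point of `E` lies on any of its
lines, and the partial spread consists of exactly `(2^l - 8)/3` lines. -/
theorem blokhuis_brouwer_partial_spread (l : ℕ) (hl : 3 ≤ l) (hodd : Odd l)
    (E : Submodule (ZMod 2) (Fin l → ZMod 2)) (hE : finrank (ZMod 2) E = 3) :
    ∃ S : Finset (Submodule (ZMod 2) (Fin l → ZMod 2)),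
      (∀ W ∈ S, finrank (ZMod 2) W = 2) ∧
      (∀ P : Submodule (ZMod 2) (Fin l → ZMod 2), finrank (ZMod 2) P = 1 →
        (P ≤ E → ∀ W ∈ S, ¬ P ≤ W) ∧
        (¬ P ≤ E → (S.filter fun W => P ≤ W).card = 1)) ∧
      S.card = (2 ^ l - 8) / 3 := by
  obtain ⟨j, hj⟩ : ∃ j, l = 3 + 2 * j := ⟨l / 2 - 1, by obtain ⟨k, rfl⟩ := hodd; omega⟩
  have hV : finrank (ZMod 2) (Fin l → ZMod 2) = finrank (ZMod 2) E + 2 * j := by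
    rw [finrank_fin_fun, hE, hj]
  obtain ⟨U, S, -, hU, hS, hcard⟩ := exists_isLinePartition_finrank_add (by omega) j hV.ge
  obtain rfl : U = ⊤ := eq_top_of_finrank_eq (hU.trans hV.symm)
  refine ⟨S, hS.finrank_eq_two, fun P hP => ⟨fun hPE W hW => hS.not_le_of_le hP hPE hW,
    hS.card_filter_le_eq_one hP le_top⟩, ?_⟩
  rw [hU, ← hV, finrank_fin_fun, hE] at hcard
  generalize 2 ^ l = N at hcard ⊢
  omega
end
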